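/- Let c be a configuration of K_n with c(v₁) = n−1 and c(v_i) ≤ n−2 for all i ≥ 2 (vertices sorted in nonincreasing order of chips). If c is not volatile, then the stable configuration obtained from c by repeatedly firing has the same number of in-chips as c. -/

import Mathlib

/-- Firing vertex `v` in `K_n`: remove `n-1` chips from `v`, add one chip to each other vertex. -/
def fireK (n : ℕ) (c : Fin n → ℕ) (v : Fin n) : Fin n → ℕ :=
  fun u => if u = v then c v - (n - 1) else c u + 1

/-- Configuration after firing `f 0, …, f (m-1)` in order in `K_n`. -/
def fireIterK (n : ℕ) (c : Fin n → ℕ) (f : ℕ → Fin n) : ℕ → Fin n → ℕ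
  | 0 => c
  | m + 1 => fireK n (fireIterK n c f m) (f m)

/-- A configuration of `K_n` is volatile if it admits an infinite legal firing sequence. -/
def VolatileK (n : ℕ) (c : Fin n → ℕ) : Prop :=
  ∃ f : ℕ → Fin n, ∀ m : ℕ, n - 1 ≤ fireIterK n c f m (f m)

/-- Configuration after firing a finite list of vertices in order in `K_n`. -/
def fireListK (n : ℕ) : (Fin n → ℕ) → List (Fin n) → (Fin n → ℕ)
  | c, [] => c
  | c, v :: l => fireListK n (fireK n c v) l

/-- A finite firing list in `K_n` is legal if each fired vertex has at least `n-1` chips. -/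
def LegalListK (n : ℕ) : (Fin n → ℕ) → List (Fin n) → Prop
  | _, [] => True
  | c, v :: l => n - 1 ≤ c v ∧ LegalListK n (fireK n c v) l

/-- The number of in-chips of a configuration of `K_n`: the number of filled cells inside
the critical triangle in the sorted grid representation, counted row by row. -/
def inChipsK (n : ℕ) (c : Fin n → ℕ) : ℕ :=
  ∑ k ∈ Finset.range n,
    min ((Finset.univ.filter fun v : Fin n => k + 1 ≤ c v).card) (n - (k + 1))

/-!
A vertex starts with at most `n - 1` chips, so a legal firing sequence from `c` that fires some
vertex twice must first have fired every vertex once; that returns to `c` and makes `c` volatile.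
Hence the sequence fires distinct vertices `w₀, …, w_{t-1}`, and `w_p` had at least `n - 1 - p`
chips in `c`. Afterwards every unfired vertex has gained `t` chips and every fired one has lost
`n - t`. Row by row in the grid, the rows of the new configuration are those of `c` cyclically
shifted by `n - t`: the first `t` rows become full inside the critical triangle, gaining `n - t`
cells each, while the last `n - t` rows lose the `t` cells of the fired vertices, and
`t (n - t) = (n - t) t`.
-/

open Finset

theorem Finset.sum_range_add_eq_of_rotate {f g : ℕ → ℕ} {t a : ℕ}
    (hlow : ∀ k < t, f k = g (a + k) + a) (hhigh : ∀ j < a, f (t + j) + t = g j) :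
    ∑ k ∈ range (t + a), f k = ∑ k ∈ range (t + a), g k := by
  have hf : ∑ k ∈ range t, f k = ∑ k ∈ range t, g (a + k) + t * a := by
    rw [sum_congr rfl fun k hk => hlow k (mem_range.1 hk), sum_add_distrib, sum_const,
      card_range, smul_eq_mul]
  have hg : ∑ j ∈ range a, f (t + j) + a * t = ∑ j ∈ range a, g j := by
    rw [← sum_congr rfl fun j hj => hhigh j (mem_range.1 hj), sum_add_distrib, sum_const,
      card_range, smul_eq_mul]
  rw [sum_range_add, add_comm t a, sum_range_add g, hf, ← hg, Nat.mul_comm]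
  ring

theorem List.Nodup.card_filter_mem {α : Type*} [Fintype α] [DecidableEq α] {l : List α}
    (hl : l.Nodup) : #{u | u ∈ l} = l.length := by
  rw [← List.toFinset_card_of_nodup hl]
  congr 1
  ext u
  simp

section Chips

variable {n : ℕ}

theorem fireListK_append (c : Fin n → ℕ) (l₁ l₂ : List (Fin n)) :
    fireListK n c (l₁ ++ l₂) = fireListK n (fireListK n c l₁) l₂ := by
  induction l₁ generalizing c with
  | nil => rfl
  | cons v l ih => exact ih _

theorem fireListK_take_add_one (c : Fin n → ℕ) (l : List (Fin n)) {p : ℕ} (hp : p < l.length) :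
    fireListK n c (l.take (p + 1)) = fireK n (fireListK n c (l.take p)) l[p] := by
  rw [List.take_add_one, List.getElem?_eq_getElem hp, Option.toList_some, fireListK_append]
  rfl

theorem legalListK_append (c : Fin n → ℕ) (l₁ l₂ : List (Fin n)) :
    LegalListK n c (l₁ ++ l₂) ↔ LegalListK n c l₁ ∧ LegalListK n (fireListK n c l₁) l₂ := by
  induction l₁ generalizing c with
  | nil => simp [LegalListK, fireListK]
  | cons v l ih => simp only [List.cons_append, LegalListK, fireListK, ih, and_assoc]

def numAbove (c : Fin n → ℕ) (k : ℕ) : ℕ := #{v | k + 1 ≤ c v}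

theorem inChipsK_eq_sum_numAbove (c : Fin n → ℕ) :
    inChipsK n c = ∑ k ∈ range n, min (numAbove c k) (n - (k + 1)) := rfl

namespace LegalListK

variable {c : Fin n → ℕ} {l : List (Fin n)}

theorem le_fireListK_take (hleg : LegalListK n c l) {p : ℕ} (hp : p < l.length) :
    n - 1 ≤ fireListK n c (l.take p) l[p] := by
  rw [← List.take_append_drop p l, List.drop_eq_getElem_cons hp, legalListK_append] at hleg
  exact hleg.2.1

theorem fireListK_add_mul_count (hleg : LegalListK n c l) (u : Fin n) :
    fireListK n c l u + n * l.count u = c u + l.length := by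
  induction l generalizing c with
  | nil => simp [fireListK]
  | cons v l ih =>
    have h := ih hleg.2
    have hv := hleg.1
    simp only [fireListK, List.count_cons, List.length_cons, beq_iff_eq, Nat.mul_add] at h ⊢
    have := u.pos
    by_cases huv : u = v
    · subst huv
      simp only [fireK, if_true] at h ⊢
      omega
    · simp only [fireK, huv, if_false, Ne.symm huv] at h ⊢
      omega

theorem fireListK_eq_self (hleg : LegalListK n c l) (hnd : l.Nodup) (hlen : l.length = n) :
    fireListK n c l = c := by
  have huniv : l.toFinset = univ :=
    eq_univ_of_card _ (by rw [List.toFinset_card_of_nodup hnd, hlen, Fintype.card_fin])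
  funext u
  have hu : u ∈ l := List.mem_toFinset.1 (huniv ▸ mem_univ u)
  have h := hleg.fireListK_add_mul_count u
  rw [List.count_eq_one_of_mem hnd hu, hlen] at h
  omega

theorem volatileK_of_fireListK_eq_self (hleg : LegalListK n c l) (hne : l ≠ [])
    (hcyc : fireListK n c l = c) : VolatileK n c := by
  have hL : 0 < l.length := List.length_pos_iff.2 hne
  let f : ℕ → Fin n := fun m => l[m % l.length]'(Nat.mod_lt _ hL)
  have hiter : ∀ m, fireIterK n c f m = fireListK n c (l.take (m % l.length)) := by
    intro m
    induction m with
    | zero => simp [fireIterK, fireListK]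
    | succ m ih =>
      have hr := Nat.mod_lt m hL
      have hmod : (m + 1) % l.length = (m % l.length + 1) % l.length := by
        conv_lhs => rw [← Nat.mod_add_div m l.length, add_right_comm, Nat.add_mul_mod_self_left]
      rw [fireIterK, ih, ← fireListK_take_add_one c l hr, hmod]
      rcases (show m % l.length + 1 ≤ l.length from hr).lt_or_eq with hlt | heq
      · rw [Nat.mod_eq_of_lt hlt]
      · rw [heq, Nat.mod_self, List.take_length, hcyc]
        rfl
  exact ⟨f, fun m => hiter m ▸ hleg.le_fireListK_take (Nat.mod_lt m hL)⟩

theorem nodup (hc : ∀ u, c u ≤ n - 1) (hnvol : ¬ VolatileK n c) (hleg : LegalListK n c l) :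
    l.Nodup := by
  induction l using List.reverseRecOn with
  | nil => exact List.nodup_nil
  | append_singleton l v ih =>
    obtain ⟨hleg, hv, -⟩ := (legalListK_append c l [v]).1 hleg
    have hnd := ih hleg
    refine List.nodup_append.2 ⟨hnd, List.nodup_singleton v, ?_⟩
    intro w hvl w' hw' hww'
    rw [hww', List.mem_singleton.1 hw'] at hvl
    have hcount := hleg.fireListK_add_mul_count v
    rw [List.count_eq_one_of_mem hnd hvl] at hcount
    have hlen : l.length = n := le_antisymm (by simpa using hnd.length_le_card)
      (by have := hc v; omega)
    exact hnvol (hleg.volatileK_of_fireListK_eq_self (List.ne_nil_of_mem hvl)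
      (hleg.fireListK_eq_self hnd hlen))

theorem sub_le_of_mem_take (hleg : LegalListK n c l) (hnd : l.Nodup) {j : ℕ} {u : Fin n}
    (hu : u ∈ l.take j) : n - j ≤ c u := by
  induction l generalizing c j with
  | nil => simp at hu
  | cons v l ih =>
    obtain ⟨hvl, hnd⟩ := List.nodup_cons.1 hnd
    cases j with
    | zero => simp at hu
    | succ j =>
      rcases List.mem_cons.1 (List.take_succ_cons ▸ hu) with rfl | hu
      · have := hleg.1
        omega
      · have huv : u ≠ v := fun h => hvl (h ▸ List.mem_of_mem_take hu)
        have := ih hleg.2 hnd hu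
        simp only [fireK, huv, if_false] at this
        omega

theorem le_numAbove (hleg : LegalListK n c l) (hnd : l.Nodup) {m : ℕ} (hml : m ≤ l.length)
    (hmn : m < n) : m ≤ numAbove c (n - 1 - m) := by
  have hndm := hnd.sublist (List.take_sublist m l)
  calc m = #{u | u ∈ l.take m} := by
        rw [hndm.card_filter_mem, List.length_take, min_eq_left hml]
    _ ≤ numAbove c (n - 1 - m) := card_le_card fun u hu => by
        simp only [mem_filter, mem_univ, true_and] at hu ⊢
        have := hleg.sub_le_of_mem_take hnd hu
        omega

theorem sub_le_numAbove_fireListK (hleg : LegalListK n c l) (hnd : l.Nodup) {k : ℕ}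
    (hk : k < l.length) : n - (k + 1) ≤ numAbove (fireListK n c l) k := by
  have hdrop : #{u | u ∈ l.drop (l.length - (k + 1))} = k + 1 := by
    rw [(hnd.sublist (List.drop_sublist _ l)).card_filter_mem, List.length_drop]
    omega
  -- a vertex is unfired, among the first `t - (k + 1)` fired, or among the last `k + 1` fired
  have hcover : n ≤ numAbove (fireListK n c l) k + #{u | u ∈ l.drop (l.length - (k + 1))} := by
    rw [numAbove, card_filter, card_filter, ← sum_add_distrib]
    calc n = ∑ _u : Fin n, 1 := by simp
      _ ≤ _ := sum_le_sum fun u _ => ?_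
    have h := hleg.fireListK_add_mul_count u
    by_cases hu : u ∈ l
    · rw [List.count_eq_one_of_mem hnd hu] at h
      rcases List.mem_append.1 (List.take_append_drop (l.length - (k + 1)) l ▸ hu) with hu | hu
      · have := hleg.sub_le_of_mem_take hnd hu
        split_ifs <;> omega
      · simp [hu]
    · rw [List.count_eq_zero_of_not_mem hu] at h
      split_ifs <;> omega
  omega

theorem numAbove_fireListK_add_length (hc : ∀ u, c u ≤ n - 1) (hleg : LegalListK n c l)
    (hnd : l.Nodup) {j : ℕ} (hj : j + l.length < n) :
    numAbove (fireListK n c l) (l.length + j) + l.length = numAbove c j := by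
  have hfired := hnd.card_filter_mem
  rw [card_filter] at hfired
  rw [numAbove, numAbove, card_filter, card_filter]
  conv_lhs => arg 2; rw [← hfired]
  rw [← sum_add_distrib]
  refine sum_congr rfl fun u _ => ?_
  have h := hleg.fireListK_add_mul_count u
  have := hc u
  by_cases hu : u ∈ l
  · rw [List.count_eq_one_of_mem hnd hu] at h
    have := hleg.sub_le_of_mem_take hnd (j := l.length) (by rwa [List.take_length])
    split_ifs <;> omega
  · rw [List.count_eq_zero_of_not_mem hu] at h
    split_ifs <;> omega

theorem inChipsK_fireListK_eq (hc : ∀ u, c u ≤ n - 1) (hleg : LegalListK n c l)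
    (hnd : l.Nodup) : inChipsK n (fireListK n c l) = inChipsK n c := by
  have ht : l.length ≤ n := by simpa using hnd.length_le_card
  obtain ⟨a, ha⟩ : ∃ a, n = l.length + a := ⟨n - l.length, by omega⟩
  rw [inChipsK_eq_sum_numAbove, inChipsK_eq_sum_numAbove, congrArg range ha]
  refine sum_range_add_eq_of_rotate (fun k hk => ?_) (fun j hj => ?_)
  · have hd := hleg.sub_le_numAbove_fireListK hnd hk
    have hc := hleg.le_numAbove hnd (m := l.length - (k + 1)) (by omega) (by omega)
    rw [show n - 1 - (l.length - (k + 1)) = a + k by omega] at hc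
    omega
  · have := hleg.numAbove_fireListK_add_length hc hnd (j := j) (by omega)
    omega

end LegalListK

end Chips

/-- If `c(v₁) = n-1`, `c(v_i) ≤ n-2` for `i ≥ 2` (vertices sorted
nonincreasingly) and `c` is not volatile, then the stable configuration obtained from `c`
by repeatedly firing has the same number of in-chips as `c`. -/
theorem stmt12 (n : ℕ) (hn : 2 ≤ n) (c : Fin n → ℕ)
    (h0 : c ⟨0, by omega⟩ = n - 1)
    (h1 : ∀ i : Fin n, i ≠ ⟨0, by omega⟩ → c i ≤ n - 2)
    (hnvol : ¬ VolatileK n c)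
    (l : List (Fin n)) (hleg : LegalListK n c l) :
    inChipsK n (fireListK n c l) = inChipsK n c := by
  have hc : ∀ u, c u ≤ n - 1 := by
    intro u
    rcases eq_or_ne u ⟨0, by omega⟩ with rfl | hu
    · exact h0.le
    · exact (h1 u hu).trans (by omega)
  exact hleg.inChipsK_fireListK_eq hc (hleg.nodup hc hnvol)
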